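/- (Core computation of Theorem 3 of the paper, in the collapsed state space.) Let β, λ, μ_p, μ_mm, p_a, μ_sub6 be nonnegative reals. Let J : ℕ × {0,1} → ℝ be a nonnegative function, where J(y,l₂) is the cost when the FastLane (head buffer, processing server and mmWave queue together) holds y packets and the sub-6 GHz server holds l₂ packets, such that y ↦ J(y,1) is nondecreasing. Let i ∈ ℕ be a threshold index for J, i.e., J(y+1,0) ≥ J(y,1) for all y ≥ i. Define T : ℕ × {0,1} → ℝ by T(y,1) = J(y,1), T(0,0) = J(0,0), and T(y,0) = min{J(y,0), J(y−1,1)} for y ≥ 1, and define J' : ℕ × {0,1} → ℝ by J'(y,l₂) = (y+l₂) + β·λ·T(y+1,l₂) + β·μ_p·T(y,l₂) + β·μ_mm·p_a·T((y−1)⁺,l₂) + β·μ_sub6·T(y,0), where (a)⁺ = max(a,0). Then J'(y+1,0) ≥ J'(y,1) for all y ≥ i+1; in particular, the threshold of J' exceeds the threshold of J by at most one. -/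

import Mathlib

/-!
Beyond the threshold `i` the minimum defining `T(n+1,0)` is attained by moving a packet, so
`T(n+1,0) = J(n,1)` for `n ≥ i`. For `y ≥ i+1` the arrival, processing and mmWave terms of
`J'(y+1,0)` and `J'(y,1)` then coincide, and the sub-6 GHz terms compare as
`T(y,0) = J(y-1,1) ≤ J(y,1) = T(y+1,0)` by monotonicity of `J(·,1)`.
-/

/-- Collapsed-state intermediate-value function: `T(y,1) = J(y,1)`,
`T(0,0) = J(0,0)`, and `T(y,0) = min{J(y,0), J(y−1,1)}` for `y ≥ 1`. -/
noncomputable def interTc (J : ℕ → Fin 2 → ℝ) : ℕ → Fin 2 → ℝ :=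
  fun y l₂ =>
    if l₂ = (1 : Fin 2) then J y 1
    else
      match y with
      | 0 => J 0 0
      | y' + 1 => min (J (y' + 1) 0) (J y' 1)

/-- Collapsed-state value-iteration step:
`J'(y,l₂) = (y+l₂) + βλ·T(y+1,l₂) + βμ_p·T(y,l₂) + βμ_mm·p_a·T((y−1)⁺,l₂)
 + βμ_sub6·T(y,0)` where `T` is the intermediate-value function of `J`. -/
noncomputable def valIterc (β lam mu_p mu_mm p_a mu_sub6 : ℝ)
    (J : ℕ → Fin 2 → ℝ) : ℕ → Fin 2 → ℝ :=
  fun y l₂ =>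
    ((y : ℝ) + (l₂.val : ℝ))
      + β * lam * interTc J (y + 1) l₂
      + β * mu_p * interTc J y l₂
      + β * mu_mm * p_a * interTc J (y - 1) l₂
      + β * mu_sub6 * interTc J y 0

lemma interTc_one (J : ℕ → Fin 2 → ℝ) (y : ℕ) : interTc J y 1 = J y 1 := by
  simp [interTc]

lemma interTc_succ_zero_of_le {J : ℕ → Fin 2 → ℝ} {y : ℕ} (h : J y 1 ≤ J (y + 1) 0) :
    interTc J (y + 1) 0 = J y 1 := by
  simp [interTc, h]

theorem stmt_19_general (β lam mu_p mu_mm p_a mu_sub6 : ℝ)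
    (hβ : 0 ≤ β) (hmu_sub6 : 0 ≤ mu_sub6)
    (J : ℕ → Fin 2 → ℝ)
    (hmono : ∀ y : ℕ, J y 1 ≤ J (y + 1) 1)
    (i : ℕ) (hthr : ∀ y : ℕ, i ≤ y → J y 1 ≤ J (y + 1) 0) :
    ∀ y : ℕ, i + 1 ≤ y →
      valIterc β lam mu_p mu_mm p_a mu_sub6 J y 1
        ≤ valIterc β lam mu_p mu_mm p_a mu_sub6 J (y + 1) 0 := by
  intro y hy
  obtain ⟨k, rfl⟩ : ∃ k, y = k + 1 := ⟨y - 1, by omega⟩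
  have hT : ∀ n, i ≤ n → interTc J (n + 1) 0 = J n 1 :=
    fun n hn => interTc_succ_zero_of_le (hthr n hn)
  simp only [valIterc, interTc_one, Nat.add_sub_cancel]
  rw [hT (k + 1 + 1) (by omega), hT (k + 1) (by omega), hT k (by omega)]
  have hsub6 := mul_le_mul_of_nonneg_left (hmono k) (mul_nonneg hβ hmu_sub6)
  simp only [Fin.val_one, Fin.val_zero, Nat.cast_add, Nat.cast_one, Nat.cast_zero]
  linarith

theorem stmt_19 (β lam mu_p mu_mm p_a mu_sub6 : ℝ)
    (hβ : 0 ≤ β) (hlam : 0 ≤ lam) (hmu_p : 0 ≤ mu_p) (hmu_mm : 0 ≤ mu_mm)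
    (hp_a : 0 ≤ p_a) (hmu_sub6 : 0 ≤ mu_sub6)
    (J : ℕ → Fin 2 → ℝ) (hJnonneg : ∀ y l₂, 0 ≤ J y l₂)
    (hmono : ∀ y : ℕ, J y 1 ≤ J (y + 1) 1)
    (i : ℕ) (hthr : ∀ y : ℕ, i ≤ y → J y 1 ≤ J (y + 1) 0) :
    ∀ y : ℕ, i + 1 ≤ y →
      valIterc β lam mu_p mu_mm p_a mu_sub6 J y 1
        ≤ valIterc β lam mu_p mu_mm p_a mu_sub6 J (y + 1) 0 :=
  stmt_19_general β lam mu_p mu_mm p_a mu_sub6 hβ hmu_sub6 J hmono i hthr
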